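/- Let (K, v) be a valued field of characteristic p > 0 with valuation ring O. Let b_0, …, b_n ∈ O with min_{0 ≤ j ≤ n} v(b_j) = 0, and let f ∈ O. Then: (a) among the elements c_0 = −b_0·f, c_j = b_{j−1}^p − b_j·f for 1 ≤ j ≤ n, and c_{n+1} = b_n^p (the coefficients of the additive polynomial x ↦ g(x)^p − g(x)·f, where g(x) = ∑_j b_j·x^{p^j}), at least one has valuation 0; and (b) among the elements c_0 = −b_0, c_j = b_{j−1}^p·f − b_j for 1 ≤ j ≤ n, and c_{n+1} = b_n^p·f (the coefficients of x ↦ g(x)^p·f − g(x)), at least one has valuation 0. -/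

import Mathlib

/-!
Let `m` be the largest and `l` the smallest index with `v(b_m) = v(b_l) = 0`.
In (a), either `m = n` and `c_{n+1} = b_n^p` is a unit, or `v(b_{m+1}) > 0` and
`c_{m+1} = b_m^p - b_{m+1} f` is a unit minus an element of the maximal ideal.
Symmetrically in (b), either `l = 0` and `c'_0 = -b_0`, or `v(b_{l-1}) > 0` and
`c'_l = b_{l-1}^p f - b_l` is an element of the maximal ideal minus a unit.
-/

/-- A valuation on a field `K` with values in the linearly ordered abelian group `Γ`
(together with `∞ = ⊤`), surjective onto `Γ`, i.e. `Γ = v(K^×)`. -/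
structure ValuedFieldAux (K : Type*) [Field K] (Γ : Type*)
    [AddCommGroup Γ] [LinearOrder Γ] [IsOrderedAddMonoid Γ] where
  v : K → WithTop Γ
  v_eq_top_iff : ∀ x : K, v x = ⊤ ↔ x = 0
  v_mul : ∀ x y : K, v (x * y) = v x + v y
  v_add : ∀ x y : K, min (v x) (v y) ≤ v (x + y)
  v_surj : ∀ γ : Γ, ∃ x : K, v x = (γ : WithTop Γ)

namespace Nat

variable {P : ℕ → Prop} [DecidablePred P] {n : ℕ}

theorem exists_le_and_not_succ_of_exists_le (h : ∃ j ≤ n, P j) :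
    ∃ j ≤ n, P j ∧ (j < n → ¬P (j + 1)) := by
  obtain ⟨j, hjn, hj⟩ := h
  exact ⟨findGreatest P n, findGreatest_le n, findGreatest_spec hjn hj,
    fun hlt => findGreatest_is_greatest (lt_add_one _) hlt⟩

theorem exists_le_and_not_pred_of_exists_le (h : ∃ j ≤ n, P j) :
    ∃ j ≤ n, P j ∧ (0 < j → ¬P (j - 1)) := by
  have hex : ∃ j, P j := h.imp fun _ => And.right
  obtain ⟨j, hjn, hj⟩ := h
  exact ⟨Nat.find hex, (Nat.find_min' hex hj).trans hjn, Nat.find_spec hex,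
    fun hpos => Nat.find_min hex (sub_one_lt_of_lt hpos)⟩

end Nat

namespace AddValuation

variable {R Γ₀ : Type*} [Ring R] [LinearOrderedAddCommMonoidWithTop Γ₀] (v : AddValuation R Γ₀)
  {x y f : R}

theorem map_pow_eq_zero (hx : v x = 0) (p : ℕ) : v (x ^ p) = 0 := by
  rw [map_pow, hx, nsmul_zero]

theorem map_mul_pos (hx : 0 < v x) (hy : 0 ≤ v y) : 0 < v (x * y) := by
  rw [map_mul]
  exact add_pos_of_pos_of_nonneg hx hy

theorem map_pow_sub_mul_eq_zero (hx : v x = 0) (hy : 0 < v y) (hf : 0 ≤ v f) (p : ℕ) :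
    v (x ^ p - y * f) = 0 := by
  have hxp := v.map_pow_eq_zero hx p
  rw [v.map_sub_eq_of_lt_left (hxp ▸ v.map_mul_pos hy hf), hxp]

theorem map_pow_mul_sub_eq_zero (hx : 0 < v x) (hy : v y = 0) (hf : 0 ≤ v f) {p : ℕ}
    (hp : p ≠ 0) : v (x ^ p * f - y) = 0 := by
  have hxp : 0 < v (x ^ p) := by
    rw [map_pow]
    exact (nsmul_pos_iff hp).mpr hx
  rw [v.map_sub_eq_of_lt_right (hy ▸ v.map_mul_pos hxp hf), hy]

end AddValuation

namespace ValuedFieldAux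

variable {K : Type*} [Field K] {Γ : Type*} [AddCommGroup Γ] [LinearOrder Γ]
  [IsOrderedAddMonoid Γ] (vf : ValuedFieldAux K Γ)

theorem v_zero : vf.v 0 = ⊤ :=
  (vf.v_eq_top_iff 0).mpr rfl

theorem v_one : vf.v 1 = 0 := by
  have h : vf.v 1 + vf.v 1 = vf.v 1 := by rw [← vf.v_mul, one_mul]
  lift vf.v 1 to Γ using mt (vf.v_eq_top_iff 1).mp one_ne_zero with a
  have ha : a + a = a := by exact_mod_cast h
  exact_mod_cast add_eq_right.mp ha

def toAddValuation : AddValuation K (WithTop Γ) :=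
  AddValuation.of vf.v vf.v_zero vf.v_one vf.v_add vf.v_mul

end ValuedFieldAux

theorem stmt_17_general (p : ℕ) (hp : p.Prime) (K : Type*) [Field K]
    (Γ : Type*) [AddCommGroup Γ] [LinearOrder Γ] [IsOrderedAddMonoid Γ] (vf : ValuedFieldAux K Γ)
    (n : ℕ) (b : ℕ → K)
    (hb : ∀ j ≤ n, 0 ≤ vf.v (b j))
    (hbmin : (Finset.range (n + 1)).inf (fun j => vf.v (b j)) = 0)
    (f : K) (hf : 0 ≤ vf.v f)
    (c c' : ℕ → K)
    (hcj : ∀ j, 1 ≤ j → j ≤ n → c j = (b (j - 1)) ^ p - b j * f)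
    (hcn : c (n + 1) = (b n) ^ p)
    (hc'0 : c' 0 = -(b 0))
    (hc'j : ∀ j, 1 ≤ j → j ≤ n → c' j = (b (j - 1)) ^ p * f - b j) :
    (∃ j ≤ n + 1, vf.v (c j) = 0) ∧ (∃ j ≤ n + 1, vf.v (c' j) = 0) := by
  classical
  set v := vf.toAddValuation
  have hunit : ∃ j ≤ n, v (b j) = 0 := by
    obtain ⟨j, hj, hinf⟩ := Finset.exists_mem_eq_inf _ Finset.nonempty_range_add_one
      fun j => vf.v (b j)
    exact ⟨j, Finset.mem_range_succ_iff.mp hj, hinf.symm.trans hbmin⟩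
  have hpos : ∀ j ≤ n, ¬v (b j) = 0 → 0 < v (b j) := fun j hj hne =>
    lt_of_le_of_ne (hb j hj) (Ne.symm hne)
  constructor
  · obtain ⟨m, hmn, hm, hlast⟩ := Nat.exists_le_and_not_succ_of_exists_le hunit
    rcases hmn.lt_or_eq with hmn | rfl
    · refine ⟨m + 1, by omega, ?_⟩
      rw [hcj _ (Nat.le_add_left 1 m) hmn, Nat.add_sub_cancel]
      exact v.map_pow_sub_mul_eq_zero hm (hpos _ hmn (hlast hmn)) hf p
    · exact ⟨m + 1, le_rfl, hcn ▸ v.map_pow_eq_zero hm p⟩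
  · obtain ⟨l, hln, hl, hfirst⟩ := Nat.exists_le_and_not_pred_of_exists_le hunit
    rcases l.eq_zero_or_pos with rfl | hl0
    · exact ⟨0, Nat.zero_le _, by rw [hc'0, ← hl]; exact v.map_neg _⟩
    · refine ⟨l, by omega, ?_⟩
      rw [hc'j l hl0 hln]
      exact v.map_pow_mul_sub_eq_zero (hpos _ (by omega) (hfirst hl0)) hl hf hp.ne_zero

/-- Let `(K, v)` be a valued field of characteristic `p > 0` with
valuation ring `O`. Let `b_0, …, b_n ∈ O` with `min_j v(b_j) = 0` and `f ∈ O`. Then: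
(a) among the coefficients `c_0 = −b_0·f`, `c_j = b_{j−1}^p − b_j·f` (`1 ≤ j ≤ n`),
`c_{n+1} = b_n^p` of `x ↦ g(x)^p − g(x)·f` (where `g(x) = ∑_j b_j·x^{p^j}`), at least
one has valuation `0`; and (b) among `c'_0 = −b_0`, `c'_j = b_{j−1}^p·f − b_j`
(`1 ≤ j ≤ n`), `c'_{n+1} = b_n^p·f` (the coefficients of `x ↦ g(x)^p·f − g(x)`),
at least one has valuation `0`. -/
theorem stmt_17 (p : ℕ) (hp : p.Prime) (K : Type*) [Field K] [CharP K p]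
    (Γ : Type*) [AddCommGroup Γ] [LinearOrder Γ] [IsOrderedAddMonoid Γ] (vf : ValuedFieldAux K Γ)
    (n : ℕ) (b : ℕ → K)
    (hb : ∀ j ≤ n, 0 ≤ vf.v (b j))
    (hbmin : (Finset.range (n + 1)).inf (fun j => vf.v (b j)) = 0)
    (f : K) (hf : 0 ≤ vf.v f)
    (c c' : ℕ → K)
    (hc0 : c 0 = -(b 0 * f))
    (hcj : ∀ j, 1 ≤ j → j ≤ n → c j = (b (j - 1)) ^ p - b j * f)
    (hcn : c (n + 1) = (b n) ^ p)
    (hc'0 : c' 0 = -(b 0))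
    (hc'j : ∀ j, 1 ≤ j → j ≤ n → c' j = (b (j - 1)) ^ p * f - b j)
    (hc'n : c' (n + 1) = (b n) ^ p * f) :
    (∃ j ≤ n + 1, vf.v (c j) = 0) ∧ (∃ j ≤ n + 1, vf.v (c' j) = 0) :=
  stmt_17_general p hp K Γ vf n b hb hbmin f hf c c' hcj hcn hc'0 hc'j
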